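/- arXiv:1712.06849 — 4 statements merged into one kernel-verified Lean document; each statement's English description precedes it below -/
import Mathlib

section
/- Let Ḡ be an n×n matrix with entries in an associative ℂ-algebra, graded antisymmetric with respect to ε (i.e. Ḡ_{ab} = −ϵḠ_{ba}), whose lowered-index entries Ḡ_{ab} = ε_{ac}Ḡ^c_{\ b} satisfy the Lie algebra relations [Ḡ_{ab}, Ḡ_{cd}] = −ε_{cb}Ḡ_{ad} + ε_{ad}Ḡ_{cb} + ε_{ac}Ḡ_{bd} − ε_{db}Ḡ_{ca}. Then Ḡ² + βḠ is graded symmetric: (Ḡ² + βḠ)_{ab} = ϵ(Ḡ² + βḠ)_{ba}, where β = n/2 − ϵ. -/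
open Matrix BigOperators

noncomputable section

/-- The flip (permutation) operator `P` on the tensor square. -/
def Pm (A : Type*) [Ring A] (n : ℕ) : Matrix (Fin n × Fin n) (Fin n × Fin n) A :=
  fun p q => if p.1 = q.2 ∧ p.2 = q.1 then 1 else 0

/-- The rank-one invariant operator `K^{a₁a₂}_{b₁b₂} = ε^{a₁a₂} ε_{b₁b₂}`. -/
def Km (A : Type*) [Ring A] [Algebra ℂ A] {n : ℕ}
    (ε εInv : Matrix (Fin n) (Fin n) ℂ) :
    Matrix (Fin n × Fin n) (Fin n × Fin n) A :=
  fun p q => algebraMap ℂ A (εInv p.1 p.2 * ε q.1 q.2)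

/-- `M₁ = M ⊗ I`, acting on the first tensor factor. -/
def T1 {n : ℕ} {A : Type*} [Ring A] (M : Matrix (Fin n) (Fin n) A) :
    Matrix (Fin n × Fin n) (Fin n × Fin n) A :=
  fun p q => if p.2 = q.2 then M p.1 q.1 else 0

/-- `M₂ = I ⊗ M`, acting on the second tensor factor. -/
def T2 {n : ℕ} {A : Type*} [Ring A] (M : Matrix (Fin n) (Fin n) A) :
    Matrix (Fin n × Fin n) (Fin n × Fin n) A :=
  fun p q => if p.1 = q.1 then M p.2 q.2 else 0

/-- Index lowering with the form ε: `M_{ab} = ε_{ac} M^c_b`. -/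
def lowIx {n : ℕ} {A : Type*} [Ring A] [Algebra ℂ A]
    (ε : Matrix (Fin n) (Fin n) ℂ) (M : Matrix (Fin n) (Fin n) A) :
    Matrix (Fin n) (Fin n) A :=
  fun a b => ∑ c, ε a c • M c b

/-- The fundamental R matrix `R(u) = u(u+β) I + (u+β) P − ϵ u K`. -/
def Rm (A : Type*) [Ring A] [Algebra ℂ A] {n : ℕ}
    (ε εInv : Matrix (Fin n) (Fin n) ℂ) (ϵ β u : ℂ) :
    Matrix (Fin n × Fin n) (Fin n × Fin n) A :=
  (u * (u + β)) • (1 : Matrix (Fin n × Fin n) (Fin n × Fin n) A)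
    + (u + β) • Pm A n + (-(ϵ * u)) • Km A ε εInv

/-- The so(n)/sp(n) Lie algebra relations for a lowered-index matrix of generators. -/
def LieRel {n : ℕ} {A : Type*} [Ring A] [Algebra ℂ A]
    (ε : Matrix (Fin n) (Fin n) ℂ) (Gl : Matrix (Fin n) (Fin n) A) : Prop :=
  ∀ a b c d, Gl a b * Gl c d - Gl c d * Gl a b =
    -(ε c b • Gl a d) + ε a d • Gl c b + ε a c • Gl b d - ε d b • Gl c a

/-- Graded antisymmetry: `M_{ab} = −ϵ M_{ba}`. -/
def GAnti {n : ℕ} {A : Type*} [Ring A] [Algebra ℂ A]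
    (ϵ : ℂ) (Gl : Matrix (Fin n) (Fin n) A) : Prop :=
  ∀ a b, Gl a b = -(ϵ • Gl b a)

/-- Graded antisymmetrization over all four indices of the product
`Gl_{[a b} Gl_{c d)}`: antisymmetrization for ϵ = 1, symmetrization for ϵ = −1. -/
def gradedW {n : ℕ} {A : Type*} [Ring A] [Algebra ℂ A]
    (ϵ : ℂ) (Gl : Matrix (Fin n) (Fin n) A) (a b c d : Fin n) : A :=
  ∑ σ : Equiv.Perm (Fin 4),
    (if Equiv.Perm.sign σ = 1 then (1 : ℂ) else -ϵ) •
      (Gl (![a,b,c,d] (σ 0)) (![a,b,c,d] (σ 1)) *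
       Gl (![a,b,c,d] (σ 2)) (![a,b,c,d] (σ 3)))

theorem stmt4 (n : ℕ) (ϵ β : ℂ) (hϵ : ϵ = 1 ∨ ϵ = -1)
    (hβ : β = (n : ℂ) / 2 - ϵ)
    (ε εInv : Matrix (Fin n) (Fin n) ℂ)
    (hsym : ∀ a b, ε a b = ϵ * ε b a)
    (hinv : ε * εInv = 1) (hinv' : εInv * ε = 1)
    (A : Type*) [Ring A] [Algebra ℂ A]
    (G : Matrix (Fin n) (Fin n) A)
    (hanti : GAnti ϵ (lowIx ε G))
    (hLie : LieRel ε (lowIx ε G)) :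
    ∀ a b, lowIx ε (G * G) a b + β • lowIx ε G a b =
      ϵ • (lowIx ε (G * G) b a + β • lowIx ε G b a) := by
  have hϵ2 : ϵ * ϵ = 1 := by rcases hϵ with h | h <;> simp [h]
  set Gl : Matrix (Fin n) (Fin n) A := lowIx ε G with hGl
  -- symmetry of εInv
  have hεInvsym : ∀ a b, εInv a b = ϵ * εInv b a := by
    have h1 : ε.transpose = ϵ • ε := by
      ext a b; simp only [Matrix.transpose_apply, Matrix.smul_apply, smul_eq_mul]
      exact hsym b a
    have h2 : εInv.transpose * ε.transpose = 1 := by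
      rw [← Matrix.transpose_mul, hinv, Matrix.transpose_one]
    rw [h1, Matrix.mul_smul] at h2
    have h3 : εInv.transpose * ε = ϵ • (1 : Matrix (Fin n) (Fin n) ℂ) := by
      calc εInv.transpose * ε = ϵ • (ϵ • (εInv.transpose * ε)) := by
            rw [smul_smul, hϵ2, one_smul]
        _ = ϵ • (1 : Matrix (Fin n) (Fin n) ℂ) := by rw [h2]
    have hT : εInv.transpose = ϵ • εInv := by
      calc εInv.transpose = εInv.transpose * (ε * εInv) := by rw [hinv, Matrix.mul_one]
        _ = (εInv.transpose * ε) * εInv := by rw [Matrix.mul_assoc]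
        _ = ϵ • εInv := by rw [h3, Matrix.smul_mul, Matrix.one_mul]
    intro a b
    have := congrFun (congrFun hT b) a
    simpa [Matrix.transpose_apply, Matrix.smul_apply, smul_eq_mul] using this
  -- delta lemmas
  have hdel1 : ∀ k e, (∑ m, εInv k m * ε m e) = if k = e then (1:ℂ) else 0 := by
    intro k e
    have := congrFun (congrFun hinv' k) e
    simpa [Matrix.mul_apply, Matrix.one_apply] using this
  have hdel2 : ∀ b m, (∑ k, ε b k * εInv k m) = if b = m then (1:ℂ) else 0 := by
    intro b m
    have := congrFun (congrFun hinv b) m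
    simpa [Matrix.mul_apply, Matrix.one_apply] using this
  have htr : (∑ k : Fin n, ∑ m, εInv k m * ε m k) = (n : ℂ) := by
    simp [hdel1]
  -- lowered G*G as double sum
  have hGG : ∀ a b, lowIx ε (G * G) a b
      = ∑ k, ∑ m, εInv k m • (Gl a k * Gl m b) := by
    intro a b
    have expand : ∀ m k, Gl m k = ∑ c, ε m c • G c k := fun _ _ => rfl
    -- RHS: contract the εInv with the ε inside Gl m b
    have step : ∀ k, (∑ m, εInv k m • (Gl a k * Gl m b))
        = Gl a k * G k b := by
      intro k
      have : ∀ m, εInv k m • (Gl a k * Gl m b)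
          = ∑ e, (εInv k m * ε m e) • (Gl a k * G e b) := by
        intro m
        rw [expand m b, Finset.mul_sum, Finset.smul_sum]
        refine Finset.sum_congr rfl fun e _ => ?_
        rw [mul_smul_comm, smul_smul]
      simp_rw [this]
      rw [Finset.sum_comm]
      have : ∀ e, (∑ m, (εInv k m * ε m e) • (Gl a k * G e b))
          = (if k = e then (1:ℂ) else 0) • (Gl a k * G e b) := by
        intro e
        rw [← Finset.sum_smul, hdel1]
      simp_rw [this]
      simp [Finset.sum_ite_eq]
    simp_rw [step]
    show (∑ c, ε a c • (G * G) c b) = _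
    simp_rw [Matrix.mul_apply, Finset.smul_sum, expand a]
    rw [Finset.sum_comm]
    refine Finset.sum_congr rfl fun k _ => ?_
    rw [Finset.sum_mul]
    refine Finset.sum_congr rfl fun c _ => ?_
    rw [smul_mul_assoc]
  -- the graded transpose of the double sum
  have claim1 : ∀ a b, ϵ • (∑ k, ∑ m, εInv k m • (Gl b k * Gl m a))
      = ∑ k, ∑ m, εInv k m • (Gl m b * Gl a k) := by
    intro a b
    rw [Finset.smul_sum]
    simp_rw [Finset.smul_sum, smul_smul]
    rw [Finset.sum_comm]
    refine Finset.sum_congr rfl fun x _ => Finset.sum_congr rfl fun y _ => ?_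
    -- (ϵ * εInv y x) • (Gl b y * Gl x a) = εInv x y • (Gl y b * Gl a x)
    rw [hanti b y, hanti x a, hεInvsym x y]
    rw [neg_mul_neg, smul_mul_assoc, mul_smul_comm, smul_smul, smul_smul,
      mul_assoc (ϵ * εInv y x) ϵ ϵ, hϵ2, mul_one]
  -- main commutator computation
  intro a b
  rw [hGG a b, hGG b a]
  have key : (∑ k, ∑ m, εInv k m • (Gl a k * Gl m b))
      - ϵ • (∑ k, ∑ m, εInv k m • (Gl b k * Gl m a))
      = (-(n:ℂ) + 2 * ϵ) • Gl a b := by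
    rw [claim1 a b, ← Finset.sum_sub_distrib]
    simp_rw [← Finset.sum_sub_distrib, ← smul_sub]
    have hcomm : ∀ k m : Fin n, εInv k m • (Gl a k * Gl m b - Gl m b * Gl a k)
        = -((εInv k m * ε m k) • Gl a b) + (εInv k m * ε a b) • Gl m k
          + (εInv k m * ε a m) • Gl k b - (εInv k m * ε b k) • Gl m a := by
      intro k m
      rw [hLie a k m b]
      module
    simp_rw [hcomm]
    have split : ∀ k : Fin n, (∑ m, (-((εInv k m * ε m k) • Gl a b)
          + (εInv k m * ε a b) • Gl m k
          + (εInv k m * ε a m) • Gl k b - (εInv k m * ε b k) • Gl m a))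
        = -((∑ m, (εInv k m * ε m k)) • Gl a b)
          + (∑ m, (εInv k m * ε a b) • Gl m k)
          + (∑ m, (εInv k m * ε a m)) • Gl k b
          - (∑ m, (εInv k m * ε b k) • Gl m a) := by
      intro k
      rw [Finset.sum_sub_distrib, Finset.sum_add_distrib, Finset.sum_add_distrib,
        Finset.sum_neg_distrib, ← Finset.sum_smul, ← Finset.sum_smul]
    simp_rw [split]
    rw [Finset.sum_sub_distrib, Finset.sum_add_distrib, Finset.sum_add_distrib,
      Finset.sum_neg_distrib, ← Finset.sum_smul]
    rw [htr]
    -- second term: vanishes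
    have hS : (∑ k : Fin n, ∑ m, (εInv k m * ε a b) • Gl m k) = 0 := by
      have : (∑ k : Fin n, ∑ m, (εInv k m * ε a b) • Gl m k)
          = ε a b • (∑ k : Fin n, ∑ m, εInv k m • Gl m k) := by
        rw [Finset.smul_sum]
        refine Finset.sum_congr rfl fun k _ => ?_
        rw [Finset.smul_sum]
        refine Finset.sum_congr rfl fun m _ => ?_
        rw [smul_smul, mul_comm]
      rw [this]
      have hSS : (∑ k : Fin n, ∑ m, εInv k m • Gl m k)
          = -(∑ k : Fin n, ∑ m, εInv k m • Gl m k) := by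
        conv_lhs => rw [Finset.sum_comm]
        rw [← Finset.sum_neg_distrib]
        refine Finset.sum_congr rfl fun k _ => ?_
        rw [← Finset.sum_neg_distrib]
        refine Finset.sum_congr rfl fun m _ => ?_
        -- εInv m k • Gl k m = -(εInv k m • Gl m k)
        rw [hεInvsym m k, hanti k m, smul_neg, smul_smul,
          show ϵ * εInv k m * ϵ = εInv k m by
            rw [mul_comm ϵ (εInv k m), mul_assoc, hϵ2, mul_one]]
      have h2 : (2:ℂ) • (∑ k : Fin n, ∑ m, εInv k m • Gl m k) = 0 := by
        rw [two_smul]; nth_rewrite 1 [hSS]; rw [neg_add_cancel]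
      have h3 : (∑ k : Fin n, ∑ m, εInv k m • Gl m k) = 0 := by
        have h4 := congrArg (fun x => ((2:ℂ)⁻¹) • x) h2
        simp only [smul_smul, smul_zero] at h4
        norm_num at h4
        exact h4
      rw [h3, smul_zero]
    rw [hS]
    -- third term
    have hT3 : (∑ k : Fin n, (∑ m, (εInv k m * ε a m)) • Gl k b) = ϵ • Gl a b := by
      have : ∀ k, (∑ m, (εInv k m * ε a m)) = if k = a then ϵ else 0 := by
        intro k
        have : (∑ m, (εInv k m * ε a m)) = ϵ * (∑ m, εInv k m * ε m a) := by
          rw [Finset.mul_sum]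
          exact Finset.sum_congr rfl fun m _ => by rw [hsym a m]; ring
        rw [this, hdel1]
        split <;> simp
      simp_rw [this]
      simp [ite_smul, Finset.sum_ite_eq]
    rw [hT3]
    -- fourth term
    have hT4 : (∑ k : Fin n, ∑ m, (εInv k m * ε b k) • Gl m a) = -(ϵ • Gl a b) := by
      rw [Finset.sum_comm]
      have : ∀ m, (∑ k, (εInv k m * ε b k) • Gl m a)
          = (if b = m then (1:ℂ) else 0) • Gl m a := by
        intro m
        rw [← Finset.sum_smul, ← hdel2 b m]
        congr 1
        exact Finset.sum_congr rfl fun k _ => by ring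
      simp_rw [this]
      simp [ite_smul, hanti b a]
    rw [hT4]
    module
  -- finish
  have hba : Gl b a = -(ϵ • Gl a b) := hanti b a
  have hfin : ϵ • (β • Gl b a) = -(β • Gl a b) := by
    rw [hba, smul_neg, smul_neg, smul_smul, smul_smul,
      show ϵ * β * ϵ = β by rw [mul_comm ϵ β, mul_assoc, hϵ2, mul_one]]
  rw [smul_add, hfin]
  have := key
  -- goal: S_ab + β•Gl a b = ϵ•S_ba - β•Gl a b
  have keq : (∑ k, ∑ m, εInv k m • (Gl a k * Gl m b))
      = ϵ • (∑ k, ∑ m, εInv k m • (Gl b k * Gl m a)) + (-(n:ℂ) + 2 * ϵ) • Gl a b := by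
    rw [← key]; abel
  rw [keq, hβ]
  module
end
end

section
/- Suppose Ḡ is graded antisymmetric, satisfies the Lie algebra commutation relations with ε, and additionally Ḡ² + βḠ = m₂·I for a central element m₂. Then L(u) = u·I + Ḡ satisfies the RLL relation R₁₂(u−v) L₁(u) L₂(v) = L₂(v) L₁(u) R₁₂(u−v) with R(u) = u(u+β)I + (u+β)P − ϵuK, for all u, v. -/
open Matrix BigOperators

noncomputable section

section Aux
set_option linter.unusedSectionVars false
set_option maxHeartbeats 1000000
variable {n : ℕ} {A : Type*} [Ring A] [Algebra ℂ A]

omit [Algebra ℂ A] in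
lemma T1_add (M N : Matrix (Fin n) (Fin n) A) : T1 (M+N) = T1 M + T1 N := by
  ext p q; simp [T1]; split <;> simp

omit [Algebra ℂ A] in
lemma T2_add (M N : Matrix (Fin n) (Fin n) A) : T2 (M+N) = T2 M + T2 N := by
  ext p q; simp [T2]; split <;> simp

lemma T1_smul (c : ℂ) (M : Matrix (Fin n) (Fin n) A) :
    T1 (c • M) = c • T1 M := by
  ext p q; by_cases h : p.2 = q.2 <;> simp [T1, h]

lemma T2_smul (c : ℂ) (M : Matrix (Fin n) (Fin n) A) :
    T2 (c • M) = c • T2 M := by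
  ext p q; by_cases h : p.1 = q.1 <;> simp [T2, h]

omit [Algebra ℂ A] in
lemma T2_smulA (a : A) (M : Matrix (Fin n) (Fin n) A) :
    T2 (a • M) = a • T2 M := by
  ext p q; by_cases h : p.1 = q.1 <;> simp [T2, h]

omit [Algebra ℂ A] in
lemma T1_one : T1 (1 : Matrix (Fin n) (Fin n) A) = 1 := by
  ext ⟨a₁,a₂⟩ ⟨c₁,c₂⟩
  simp [T1, Matrix.one_apply, Prod.ext_iff, ite_and]
  by_cases h : a₁ = c₁ <;> by_cases h2 : a₂ = c₂ <;> simp [h, h2]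

omit [Algebra ℂ A] in
lemma T2_one : T2 (1 : Matrix (Fin n) (Fin n) A) = 1 := by
  ext ⟨a₁,a₂⟩ ⟨c₁,c₂⟩
  simp [T2, Matrix.one_apply, Prod.ext_iff, ite_and]

omit [Algebra ℂ A] in
lemma T2_mul (M N : Matrix (Fin n) (Fin n) A) : T2 (M*N) = T2 M * T2 N := by
  ext ⟨a₁,a₂⟩ ⟨c₁,c₂⟩
  simp [T2, Matrix.mul_apply, Fintype.sum_prod_type, ite_and, mul_ite, ite_mul]

omit [Algebra ℂ A] in
lemma P_T1 (M : Matrix (Fin n) (Fin n) A) : Pm A n * T1 M = T2 M * Pm A n := by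
  ext ⟨a₁,a₂⟩ ⟨c₁,c₂⟩
  simp [Pm, T1, T2, Matrix.mul_apply, Fintype.sum_prod_type, ite_and]

omit [Algebra ℂ A] in
lemma P_T2 (M : Matrix (Fin n) (Fin n) A) : Pm A n * T2 M = T1 M * Pm A n := by
  ext ⟨a₁,a₂⟩ ⟨c₁,c₂⟩
  simp [Pm, T1, T2, Matrix.mul_apply, Fintype.sum_prod_type, ite_and]

omit [Algebra ℂ A] in
lemma T1_mul_T2_apply (M N : Matrix (Fin n) (Fin n) A) (p q : Fin n × Fin n) :
    (T1 M * T2 N) p q = M p.1 q.1 * N p.2 q.2 := by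
  simp [T1, T2, Matrix.mul_apply, Fintype.sum_prod_type, ite_and, mul_ite, ite_mul]

omit [Algebra ℂ A] in
lemma T2_mul_T1_apply (M N : Matrix (Fin n) (Fin n) A) (p q : Fin n × Fin n) :
    (T2 N * T1 M) p q = N p.2 q.2 * M p.1 q.1 := by
  simp [T1, T2, Matrix.mul_apply, Fintype.sum_prod_type, ite_and, mul_ite, ite_mul]

omit [Algebra ℂ A] in
lemma T1_mul_P_apply (M : Matrix (Fin n) (Fin n) A) (p q : Fin n × Fin n) :
    (T1 M * Pm A n) p q = if p.2 = q.1 then M p.1 q.2 else 0 := by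
  simp [T1, Pm, Matrix.mul_apply, Fintype.sum_prod_type, ite_and, mul_ite, ite_mul]

omit [Algebra ℂ A] in
lemma T2_mul_P_apply (M : Matrix (Fin n) (Fin n) A) (p q : Fin n × Fin n) :
    (T2 M * Pm A n) p q = if p.1 = q.2 then M p.2 q.1 else 0 := by
  simp [T2, Pm, Matrix.mul_apply, Fintype.sum_prod_type, ite_and, mul_ite, ite_mul]

lemma Km_T1_apply (ε εInv : Matrix (Fin n) (Fin n) ℂ) (G : Matrix (Fin n) (Fin n) A)
    (p q : Fin n × Fin n) :
    (Km A ε εInv * T1 G) p q = εInv p.1 p.2 • ∑ b, ε b q.2 • G b q.1 := by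
  simp [Km, Matrix.mul_apply, Fintype.sum_prod_type, T1, Finset.smul_sum,
    mul_ite, Algebra.smul_def, _root_.map_mul, mul_assoc, ← Finset.mul_sum]

lemma Km_T2_apply (ε εInv : Matrix (Fin n) (Fin n) ℂ) (G : Matrix (Fin n) (Fin n) A)
    (p q : Fin n × Fin n) :
    (Km A ε εInv * T2 G) p q = εInv p.1 p.2 • ∑ b, ε q.1 b • G b q.2 := by
  simp [Km, Matrix.mul_apply, Fintype.sum_prod_type, T2, Finset.smul_sum,
    mul_ite, Algebra.smul_def, _root_.map_mul, mul_assoc, ← Finset.mul_sum]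

lemma T1_mul_Km_apply (ε εInv : Matrix (Fin n) (Fin n) ℂ) (G : Matrix (Fin n) (Fin n) A)
    (p q : Fin n × Fin n) :
    (T1 G * Km A ε εInv) p q = ε q.1 q.2 • ∑ b, εInv b p.2 • G p.1 b := by
  rw [Matrix.mul_apply, Fintype.sum_prod_type, Finset.smul_sum]
  simp only [T1, Km, ite_mul, zero_mul]
  simp only [Finset.sum_ite_eq, Finset.mem_univ, if_true]
  refine Finset.sum_congr rfl fun b _ => ?_
  rw [Algebra.smul_def, Algebra.smul_def, ← Algebra.commutes (εInv b p.2 * ε q.1 q.2),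
    mul_comm (εInv b p.2) (ε q.1 q.2), _root_.map_mul, mul_assoc]

lemma T2_mul_Km_apply (ε εInv : Matrix (Fin n) (Fin n) ℂ) (G : Matrix (Fin n) (Fin n) A)
    (p q : Fin n × Fin n) :
    (T2 G * Km A ε εInv) p q = ε q.1 q.2 • ∑ b, εInv p.1 b • G p.2 b := by
  rw [Matrix.mul_apply, Fintype.sum_prod_type, Finset.smul_sum]
  simp only [T2, Km, ite_mul, zero_mul]
  rw [Finset.sum_comm]
  simp only [Finset.sum_ite_eq, Finset.mem_univ, if_true]
  refine Finset.sum_congr rfl fun b _ => ?_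
  rw [Algebra.smul_def, Algebra.smul_def, ← Algebra.commutes (εInv p.1 b * ε q.1 q.2),
    mul_comm (εInv p.1 b) (ε q.1 q.2), _root_.map_mul, mul_assoc]

lemma Km_smul_one (ε εInv : Matrix (Fin n) (Fin n) ℂ) (m₂ : A) :
    Km A ε εInv * (m₂ • (1 : Matrix (Fin n × Fin n) (Fin n × Fin n) A))
      = m₂ • Km A ε εInv := by
  ext p q
  simp only [Km, Matrix.mul_apply, Matrix.smul_apply, Matrix.one_apply, smul_ite,
    smul_zero, smul_eq_mul, mul_one, mul_ite, mul_zero, Finset.sum_ite_eq',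
    Finset.mem_univ, if_true]
  exact Algebra.commutes _ _

lemma invSym (ϵ : ℂ) (hϵ2 : ϵ * ϵ = 1) (ε εInv : Matrix (Fin n) (Fin n) ℂ)
    (hsym : ∀ a b, ε a b = ϵ * ε b a) (hinv' : εInv * ε = 1) :
    ∀ a b, εInv a b = ϵ * εInv b a := by
  have hT : εᵀ = ϵ • ε := by ext a b; simpa using hsym b a
  have h0 : ϵ • (ε * εInvᵀ) = 1 := by
    have h := congrArg Matrix.transpose hinv'
    rw [Matrix.transpose_mul, hT, Matrix.smul_mul, Matrix.transpose_one] at h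
    exact h
  have h1 : ε * εInvᵀ = ϵ • 1 := by
    calc ε * εInvᵀ = (ϵ*ϵ) • (ε * εInvᵀ) := by rw [hϵ2, one_smul]
    _ = ϵ • (ϵ • (ε * εInvᵀ)) := by rw [smul_smul]
    _ = ϵ • 1 := by rw [h0]
  have h2 : εInvᵀ = ϵ • εInv := by
    calc εInvᵀ = (εInv * ε) * εInvᵀ := by rw [hinv', Matrix.one_mul]
    _ = εInv * (ε * εInvᵀ) := by rw [Matrix.mul_assoc]
    _ = εInv * (ϵ • (1:Matrix (Fin n) (Fin n) ℂ)) := by rw [h1]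
    _ = ϵ • εInv := by rw [Matrix.mul_smul, Matrix.mul_one]
  intro a b
  have := congrFun (congrFun h2 b) a
  simpa using this

lemma G_from_Gl (ε εInv : Matrix (Fin n) (Fin n) ℂ) (hinv' : εInv * ε = 1)
    (G : Matrix (Fin n) (Fin n) A) :
    ∀ a b, G a b = ∑ e, εInv a e • (lowIx ε G) e b := by
  intro a b
  simp only [lowIx, Finset.smul_sum, smul_smul]
  rw [Finset.sum_comm]
  have h : ∀ c : Fin n, ∑ e, (εInv a e * ε e c) • G c b = ((εInv * ε) a c) • G c b := by
    intro c; rw [Matrix.mul_apply, Finset.sum_smul]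
  rw [Finset.sum_congr rfl (fun c _ => h c), hinv']
  simp [Matrix.one_apply]

section contract
variable (ε εInv : Matrix (Fin n) (Fin n) ℂ) (hinv' : εInv * ε = 1)
  (Gl : Matrix (Fin n) (Fin n) A)
include hinv'

lemma hcontr (x y : Fin n) : ∑ f, εInv x f * ε f y = if x = y then 1 else 0 := by
  have := congrFun (congrFun hinv' x) y
  simpa [Matrix.mul_apply, Matrix.one_apply] using this

lemma S1 (a b c d : Fin n) :
    ∑ e, ∑ f, (εInv a e * εInv c f) • (ε f b • Gl e d)
      = if c = b then ∑ e, εInv a e • Gl e d else 0 := by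
  have inner : ∀ e, ∑ f, (εInv a e * εInv c f) • (ε f b • Gl e d)
      = ((if c = b then (1:ℂ) else 0) * εInv a e) • Gl e d := by
    intro e
    rw [← hcontr ε εInv hinv' c b, Finset.sum_mul, Finset.sum_smul]
    apply Finset.sum_congr rfl
    intro f _
    rw [smul_smul]
    ring_nf
  rw [Finset.sum_congr rfl (fun e _ => inner e)]
  split
  · simp [Finset.sum_congr]
  · simp

lemma S2 (a b c d : Fin n) :
    ∑ e, ∑ f, (εInv a e * εInv c f) • (ε e d • Gl f b)
      = if a = d then ∑ f, εInv c f • Gl f b else 0 := by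
  rw [Finset.sum_comm]
  have inner : ∀ f, ∑ e, (εInv a e * εInv c f) • (ε e d • Gl f b)
      = ((if a = d then (1:ℂ) else 0) * εInv c f) • Gl f b := by
    intro f
    rw [← hcontr ε εInv hinv' a d, Finset.sum_mul, Finset.sum_smul]
    apply Finset.sum_congr rfl
    intro e _
    rw [smul_smul]
    ring_nf
  rw [Finset.sum_congr rfl (fun f _ => inner f)]
  split
  · simp [Finset.sum_congr]
  · simp

lemma S3 (a b c d : Fin n) :
    ∑ e, ∑ f, (εInv a e * εInv c f) • (ε e f • Gl b d)
      = εInv c a • Gl b d := by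
  have inner : ∀ f, ∑ e, (εInv a e * εInv c f) • (ε e f • Gl b d)
      = ((if a = f then (1:ℂ) else 0) * εInv c f) • Gl b d := by
    intro f
    rw [← hcontr ε εInv hinv' a f, Finset.sum_mul, Finset.sum_smul]
    apply Finset.sum_congr rfl
    intro e _
    rw [smul_smul]
    ring_nf
  rw [Finset.sum_comm, Finset.sum_congr rfl (fun f _ => inner f)]
  simp
end contract

section main
variable (ϵ : ℂ) (ε εInv : Matrix (Fin n) (Fin n) ℂ) (hinv' : εInv * ε = 1)
  (G : Matrix (Fin n) (Fin n) A) (hanti : GAnti ϵ (lowIx ε G))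
include hinv' hanti

lemma S4 (a b c d : Fin n) :
    ∑ e, ∑ f, (εInv a e * εInv c f) • (ε d b • (lowIx ε G) f e)
      = -∑ f, (ϵ * ε d b * εInv c f) • G a f := by
  have hG := G_from_Gl ε εInv hinv' G
  calc ∑ e, ∑ f, (εInv a e * εInv c f) • (ε d b • (lowIx ε G) f e)
      = ∑ e, ∑ f, -((ϵ * ε d b * εInv c f * εInv a e) • (lowIx ε G) e f) := by
        refine Finset.sum_congr rfl fun e _ => Finset.sum_congr rfl fun f _ => ?_
        rw [hanti f e]; module
    _ = -∑ f, ∑ e, (ϵ * ε d b * εInv c f * εInv a e) • (lowIx ε G) e f := by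
        rw [Finset.sum_comm]; simp
    _ = -∑ f, (ϵ * ε d b * εInv c f) • G a f := by
        congr 1
        refine Finset.sum_congr rfl fun f _ => ?_
        rw [hG a f, Finset.smul_sum]
        refine Finset.sum_congr rfl fun e _ => ?_
        rw [smul_smul]

lemma GupAnti (x y : Fin n) :
    ∑ f, εInv y f • G x f = -(ϵ • ∑ b, εInv x b • G y b) := by
  have hG := G_from_Gl ε εInv hinv' G
  calc ∑ f, εInv y f • G x f
      = ∑ f, ∑ e, -((ϵ * εInv x e * εInv y f) • (lowIx ε G) f e) := by
        refine Finset.sum_congr rfl fun f _ => ?_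
        rw [hG x f, Finset.smul_sum]
        refine Finset.sum_congr rfl fun e _ => ?_
        rw [hanti e f]; module
    _ = -∑ e, (ϵ * εInv x e) • ∑ f, εInv y f • (lowIx ε G) f e := by
        rw [Finset.sum_comm]
        simp only [Finset.smul_sum, smul_smul, ← Finset.sum_neg_distrib]
    _ = -(ϵ • ∑ b, εInv x b • G y b) := by
        rw [Finset.smul_sum]
        congr 1
        refine Finset.sum_congr rfl fun e _ => ?_
        rw [← hG y e, smul_smul]

variable (hLie : LieRel ε (lowIx ε G))
include hLie

lemma raisedLie (a b c d : Fin n) :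
    G a b * G c d - G c d * G a b =
      -(if c = b then G a d else 0) + (if a = d then G c b else 0)
      + εInv c a • (lowIx ε G) b d + ∑ f, (ϵ * ε d b * εInv c f) • G a f := by
  have hG := G_from_Gl ε εInv hinv' G
  have e1 : G a b * G c d
      = ∑ e, ∑ f, (εInv a e * εInv c f) • ((lowIx ε G) e b * (lowIx ε G) f d) := by
    rw [hG a b, hG c d, Finset.sum_mul_sum]
    refine Finset.sum_congr rfl fun e _ => Finset.sum_congr rfl fun f _ => ?_
    rw [smul_mul_assoc, mul_smul_comm, smul_smul]
  have e2 : G c d * G a b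
      = ∑ e, ∑ f, (εInv a e * εInv c f) • ((lowIx ε G) f d * (lowIx ε G) e b) := by
    rw [hG c d, hG a b, Finset.sum_mul_sum, Finset.sum_comm]
    refine Finset.sum_congr rfl fun e _ => Finset.sum_congr rfl fun f _ => ?_
    rw [smul_mul_assoc, mul_smul_comm, smul_smul, mul_comm (εInv c f)]
  have expand : G a b * G c d - G c d * G a b
      = ∑ e, ∑ f, (εInv a e * εInv c f) •
          ((lowIx ε G) e b * (lowIx ε G) f d - (lowIx ε G) f d * (lowIx ε G) e b) := by
    rw [e1, e2, ← Finset.sum_sub_distrib]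
    refine Finset.sum_congr rfl fun e _ => ?_
    rw [← Finset.sum_sub_distrib]
    refine Finset.sum_congr rfl fun f _ => (smul_sub _ _ _).symm
  rw [expand]
  have step : ∀ e f, (εInv a e * εInv c f) •
        ((lowIx ε G) e b * (lowIx ε G) f d - (lowIx ε G) f d * (lowIx ε G) e b)
      = -((εInv a e * εInv c f) • (ε f b • (lowIx ε G) e d))
        + (εInv a e * εInv c f) • (ε e d • (lowIx ε G) f b)
        + (εInv a e * εInv c f) • (ε e f • (lowIx ε G) b d)
        - (εInv a e * εInv c f) • (ε d b • (lowIx ε G) f e) := by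
    intro e f
    rw [hLie e b f d]
    module
  simp only [step, Finset.sum_add_distrib, Finset.sum_sub_distrib, Finset.sum_neg_distrib]
  rw [S1 ε εInv hinv', S2 ε εInv hinv', S3 ε εInv hinv',
    S4 ϵ ε εInv hinv' G hanti, sub_neg_eq_add]
  simp only [← hG]
end main
end Aux

theorem stmt6 (n : ℕ) (ϵ β : ℂ) (hϵ : ϵ = 1 ∨ ϵ = -1)
    (hβ : β = (n : ℂ) / 2 - ϵ)
    (ε εInv : Matrix (Fin n) (Fin n) ℂ)
    (hsym : ∀ a b, ε a b = ϵ * ε b a)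
    (hinv : ε * εInv = 1) (hinv' : εInv * ε = 1)
    (A : Type*) [Ring A] [Algebra ℂ A]
    (G : Matrix (Fin n) (Fin n) A)
    (hanti : GAnti ϵ (lowIx ε G))
    (hLie : LieRel ε (lowIx ε G))
    (m₂ : A) (hm₂central : ∀ a b, Commute m₂ (G a b))
    (hcas : G * G + β • G = m₂ • (1 : Matrix (Fin n) (Fin n) A)) :
    ∀ u v : ℂ,
      Rm A ε εInv ϵ β (u - v)
          * T1 (u • (1 : Matrix (Fin n) (Fin n) A) + G)
          * T2 (v • (1 : Matrix (Fin n) (Fin n) A) + G) =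
      T2 (v • (1 : Matrix (Fin n) (Fin n) A) + G)
          * T1 (u • (1 : Matrix (Fin n) (Fin n) A) + G)
          * Rm A ε εInv ϵ β (u - v) := by
  intro u v
  have hϵ2 : ϵ * ϵ = 1 := by rcases hϵ with h|h <;> rw [h] <;> norm_num
  have hT1e : T1 (u • (1 : Matrix (Fin n) (Fin n) A) + G)
      = u • (1 : Matrix (Fin n × Fin n) (Fin n × Fin n) A) + T1 G := by
    rw [T1_add, T1_smul, T1_one]
  have hT2e : T2 (v • (1 : Matrix (Fin n) (Fin n) A) + G)
      = v • (1 : Matrix (Fin n × Fin n) (Fin n × Fin n) A) + T2 G := by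
    rw [T2_add, T2_smul, T2_one]
  have hP1 : Pm A n * T1 G = T2 G * Pm A n := P_T1 G
  have hP2 : Pm A n * T2 G = T1 G * Pm A n := P_T2 G
  have hK1 : Km A ε εInv * T1 G = -(Km A ε εInv * T2 G) := by
    ext p q
    rw [Matrix.neg_apply, Km_T1_apply, Km_T2_apply, ← smul_neg]
    congr 1
    have h1 : ∀ b, ε b q.2 • G b q.1 = ϵ • (ε q.2 b • G b q.1) := fun b => by
      rw [hsym b q.2, mul_smul]
    rw [Finset.sum_congr rfl (fun b _ => h1 b), ← Finset.smul_sum]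
    have h2 : ∑ b, ε q.2 b • G b q.1 = lowIx ε G q.2 q.1 := rfl
    have h3 : ∑ b, ε q.1 b • G b q.2 = lowIx ε G q.1 q.2 := rfl
    rw [h2, h3, hanti q.2 q.1, smul_neg, smul_smul, hϵ2, one_smul]
  have hK2 : T1 G * Km A ε εInv = -(T2 G * Km A ε εInv) := by
    ext p q
    rw [Matrix.neg_apply, T1_mul_Km_apply, T2_mul_Km_apply, ← smul_neg]
    congr 1
    have h1 : ∀ b, εInv b p.2 • G p.1 b = ϵ • (εInv p.2 b • G p.1 b) := fun b => by
      rw [invSym ϵ hϵ2 ε εInv hsym hinv' b p.2, mul_smul]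
    rw [Finset.sum_congr rfl (fun b _ => h1 b), ← Finset.smul_sum,
      GupAnti ϵ ε εInv hinv' G hanti p.1 p.2, smul_neg, smul_smul, hϵ2, one_smul]
  have hC : T1 G * T2 G - T2 G * T1 G + (T1 G - T2 G) * Pm A n
      = ϵ • (Km A ε εInv * T2 G - T2 G * Km A ε εInv) := by
    ext p q
    simp only [Matrix.sub_apply, Matrix.add_apply, Matrix.smul_apply, Matrix.sub_mul]
    rw [T1_mul_T2_apply, T2_mul_T1_apply, T1_mul_P_apply, T2_mul_P_apply,
      Km_T2_apply, T2_mul_Km_apply]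
    rw [raisedLie ϵ ε εInv hinv' G hanti hLie p.1 q.1 p.2 q.2]
    rw [invSym ϵ hϵ2 ε εInv hsym hinv' p.2 p.1]
    have h2 : ∑ f, (ϵ * ε q.2 q.1 * εInv p.2 f) • G p.1 f
        = -((ϵ * ε q.1 q.2) • ∑ b, εInv p.1 b • G p.2 b) := by
      calc ∑ f, (ϵ * ε q.2 q.1 * εInv p.2 f) • G p.1 f
          = (ϵ * ε q.2 q.1) • ∑ f, εInv p.2 f • G p.1 f := by
            rw [Finset.smul_sum]
            exact Finset.sum_congr rfl fun f _ => (smul_smul _ _ _).symm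
        _ = (ϵ * ε q.2 q.1) • (-(ϵ • ∑ b, εInv p.1 b • G p.2 b)) := by
            rw [GupAnti ϵ ε εInv hinv' G hanti p.1 p.2]
        _ = -((ϵ * ε q.2 q.1 * ϵ) • ∑ b, εInv p.1 b • G p.2 b) := by
            rw [smul_neg, smul_smul]
        _ = -((ϵ * ε q.1 q.2) • ∑ b, εInv p.1 b • G p.2 b) := by
            congr 2
            rw [hsym q.2 q.1]
            linear_combination (ε q.1 q.2 * ϵ) * hϵ2
    rw [h2]
    have h3 : lowIx ε G q.1 q.2 = ∑ b, ε q.1 b • G b q.2 := rfl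
    rw [h3]
    module
  have hCas2 : T2 G * T2 G + β • T2 G
      = m₂ • (1 : Matrix (Fin n × Fin n) (Fin n × Fin n) A) := by
    rw [← T2_mul, ← T2_smul, ← T2_add, hcas, T2_smulA, T2_one]
  have hsq : T2 G * T2 G
      = m₂ • (1 : Matrix (Fin n × Fin n) (Fin n × Fin n) A) - β • T2 G :=
    eq_sub_of_add_eq hCas2
  have hKc := Km_smul_one ε εInv m₂ (n := n)
  have e2' : Km A ε εInv * (T1 G * T2 G)
      = β • (Km A ε εInv * T2 G) - m₂ • Km A ε εInv := by
    rw [← Matrix.mul_assoc, hK1, Matrix.neg_mul, Matrix.mul_assoc, hsq,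
      Matrix.mul_sub, hKc, Matrix.mul_smul, neg_sub]
  have e3' : T2 G * (T1 G * Km A ε εInv)
      = β • (T2 G * Km A ε εInv) - m₂ • Km A ε εInv := by
    rw [hK2, Matrix.mul_neg, ← Matrix.mul_assoc, hsq, Matrix.sub_mul,
      Matrix.smul_mul, Matrix.one_mul, Matrix.smul_mul, neg_sub]
  have e1' : Pm A n * (T1 G * T2 G) = T2 G * (T1 G * Pm A n) := by
    rw [← Matrix.mul_assoc, hP1, Matrix.mul_assoc, hP2]
  have e7 : T1 G * T2 G = T2 G * T1 G - T1 G * Pm A n + T2 G * Pm A n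
      + ϵ • (Km A ε εInv * T2 G) - ϵ • (T2 G * Km A ε εInv) := by
    have h := hC
    rw [Matrix.sub_mul] at h
    have h0 : T1 G * T2 G
        = (T1 G * T2 G - T2 G * T1 G + (T1 G * Pm A n - T2 G * Pm A n))
          + T2 G * T1 G - T1 G * Pm A n + T2 G * Pm A n := by abel
    rw [h0, h, smul_sub]
    abel
  rw [Rm, hT1e, hT2e]
  simp only [add_mul, mul_add, smul_mul_assoc, mul_smul_comm, one_mul, mul_one,
    smul_smul, smul_add, smul_sub, mul_assoc]
  rw [e1', e2', e3', e7, hP1, hP2, hK1, hK2]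
  generalize m₂ • Km A ε εInv = KM
  module
end
end

section
/- Let Ḡ be graded antisymmetric, satisfying the so(n)/sp(n) Lie algebra relations, and define W₁₂ = −(Ḡ₂ + ϵ)((P₁₂ − ϵK₁₂)Ḡ₂ − ϵḠ₁) on the tensor square. Then W₁₂ is annihilated by K₁₂ on both sides: W₁₂K₁₂ = 0 = K₁₂W₁₂, and P₁₂W₁₂ = W₁₂P₁₂ = −ϵW₁₂, hence P₁₂W₁₂P₁₂ = W₁₂. -/
open Matrix BigOperators

noncomputable section
set_option linter.unusedSectionVars false

section lems
variable {n : ℕ} {A : Type*} [Ring A] [Algebra ℂ A]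
  (ε εInv : Matrix (Fin n) (Fin n) ℂ) (ϵ : ℂ) (G : Matrix (Fin n) (Fin n) A)

lemma mulApply (M N : Matrix (Fin n × Fin n) (Fin n × Fin n) A) (p q) :
    (M * N) p q = ∑ e, ∑ f, M p (e,f) * N (e,f) q := by
  rw [Matrix.mul_apply, Fintype.sum_prod_type]

lemma L1 : Pm A n * Pm A n = 1 := by
  ext ⟨a,b⟩ ⟨c,d⟩
  rw [mulApply]
  simp [Pm, Matrix.one_apply, Prod.ext_iff, ite_and, Finset.sum_ite_eq, Finset.sum_ite_eq']

variable (hsym : ∀ a b, ε a b = ϵ * ε b a) (hϵ2 : ϵ * ϵ = 1)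
  (hinv : ε * εInv = 1) (hinv' : εInv * ε = 1)

include hsym hϵ2 hinv hinv' in
lemma einv_symm : ∀ a b, εInv a b = ϵ * εInv b a := by
  have hT : εᵀ = ϵ • ε := by ext a b; simp [Matrix.transpose_apply]; exact hsym b a
  have h2 : εInvᵀ * εᵀ = 1 := by rw [← Matrix.transpose_mul, hinv, Matrix.transpose_one]
  rw [hT, Matrix.mul_smul] at h2
  have h3 : εInvᵀ * ε = ϵ • 1 := by
    calc εInvᵀ * ε = ϵ • (ϵ • (εInvᵀ * ε)) := by rw [smul_smul, hϵ2, one_smul]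
    _ = ϵ • 1 := by rw [h2]
  have h4 : εInvᵀ = ϵ • εInv := by
    calc εInvᵀ = εInvᵀ * (ε * εInv) := by rw [hinv, mul_one]
    _ = (εInvᵀ * ε) * εInv := by rw [Matrix.mul_assoc]
    _ = ϵ • εInv := by rw [h3, Matrix.smul_mul, Matrix.one_mul]
  intro a b
  have := congrFun (congrFun h4 b) a
  simpa [Matrix.transpose_apply] using this

include hsym hϵ2 hinv hinv' in
lemma L2 : Pm A n * Km A ε εInv = ϵ • Km A ε εInv := by
  ext ⟨a,b⟩ ⟨c,d⟩
  rw [mulApply]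
  simp only [Pm, Km, Matrix.smul_apply, ite_and, ite_mul, one_mul, zero_mul,
    Finset.sum_ite_eq, Finset.sum_ite_eq', Finset.mem_univ, if_true]
  rw [einv_symm ε εInv ϵ hsym hϵ2 hinv hinv' b a]
  rw [Algebra.smul_def, mul_assoc, _root_.map_mul]

include hsym in
lemma L3 : Km A ε εInv * Pm A n = ϵ • Km A ε εInv := by
  ext ⟨a,b⟩ ⟨c,d⟩
  rw [mulApply]
  simp only [Pm, Km, Matrix.smul_apply, ite_and, mul_ite, mul_one, mul_zero]
  rw [Finset.sum_comm]
  simp only [Finset.sum_ite_eq', Finset.mem_univ, if_true]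
  rw [hsym d c, Algebra.smul_def, ← _root_.map_mul]
  ring_nf

include hsym hinv' in
lemma L4 : Km A ε εInv * Km A ε εInv = (ϵ * n) • Km A ε εInv := by
  have key : ∑ e, ∑ f, ε e f * εInv e f = ϵ * n := by
    have : ∀ e f, ε e f * εInv e f = ϵ * (εInv e f * ε f e) := by
      intro e f; rw [hsym e f]; ring
    simp only [this, ← Finset.mul_sum]
    congr 1
    have := congrArg Matrix.trace hinv'
    simpa [Matrix.trace, Matrix.mul_apply, Matrix.diag] using this
  ext ⟨a,b⟩ ⟨c,d⟩
  rw [mulApply]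
  simp only [Km, Matrix.smul_apply, ← _root_.map_mul]
  simp only [← map_sum]
  have : ∑ e, ∑ f, εInv a b * ε e f * (εInv e f * ε c d)
      = (∑ e, ∑ f, ε e f * εInv e f) * (εInv a b * ε c d) := by
    rw [Finset.sum_mul]; congr 1; ext e; rw [Finset.sum_mul]; congr 1; ext f; ring
  rw [this, key, Algebra.smul_def, ← _root_.map_mul]

lemma L5 : Pm A n * T1 G = T2 G * Pm A n := by
  ext ⟨a,b⟩ ⟨c,d⟩
  rw [mulApply, mulApply]
  simp [Pm, T1, T2, ite_and, Finset.sum_ite_eq, Finset.sum_ite_eq']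

lemma L6 : Pm A n * T2 G = T1 G * Pm A n := by
  ext ⟨a,b⟩ ⟨c,d⟩
  rw [mulApply, mulApply]
  simp [Pm, T1, T2, ite_and, Finset.sum_ite_eq, Finset.sum_ite_eq']


lemma alg_mul (x y : ℂ) (g : A) : algebraMap ℂ A (x * y) * g = x • (y • g) := by
  rw [_root_.map_mul, mul_assoc, ← Algebra.smul_def, ← Algebra.smul_def]

lemma mul_alg (r : ℂ) (g : A) : g * algebraMap ℂ A r = r • g := by
  rw [← Algebra.commutes, ← Algebra.smul_def]

lemma hKG2 (a b c d : Fin n) :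
    (Km A ε εInv * T2 G) (a,b) (c,d) = εInv a b • lowIx ε G c d := by
  rw [mulApply]
  simp only [Km, T2, mul_ite, mul_zero]
  rw [Finset.sum_comm]
  simp only [Finset.sum_ite_eq', Finset.mem_univ, if_true]
  simp only [alg_mul, ← Finset.smul_sum]
  rfl

lemma hG1K (a b c d : Fin n) : (T1 G * Km A ε εInv) (a,b) (c,d) =
    ε c d • ∑ e, εInv e b • G a e := by
  rw [mulApply]
  simp only [T1, Km, ite_mul, zero_mul, Finset.sum_ite_eq, Finset.mem_univ, if_true]
  simp only [mul_alg]
  rw [Finset.smul_sum]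
  apply Finset.sum_congr rfl
  intro e _
  rw [smul_smul]; congr 1; ring

lemma hG2K (a b c d : Fin n) : (T2 G * Km A ε εInv) (a,b) (c,d) =
    ε c d • ∑ f, εInv a f • G b f := by
  rw [mulApply]
  simp only [T2, Km, ite_mul, zero_mul]
  rw [Finset.sum_comm]
  simp only [Finset.sum_ite_eq, Finset.mem_univ, if_true]
  simp only [mul_alg]
  rw [Finset.smul_sum]
  apply Finset.sum_congr rfl
  intro e _
  rw [smul_smul]; congr 1; ring

variable (hanti : GAnti ϵ (lowIx ε G))

include hinv' in
lemma hGexp : ∀ a e, G a e = ∑ g, εInv a g • lowIx ε G g e := by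
  intro a e
  have h1 : ∀ g, εInv a g • lowIx ε G g e = ∑ h, (εInv a g * ε g h) • G h e := by
    intro g; rw [lowIx]; rw [Finset.smul_sum]; simp only [smul_smul]
  simp only [h1]
  rw [Finset.sum_comm]
  have h2 : ∀ h, ∑ g, (εInv a g * ε g h) • G h e = ((εInv * ε) a h) • G h e := by
    intro h; rw [Matrix.mul_apply, Finset.sum_smul]
  simp only [h2, hinv', Matrix.one_apply, ite_smul, one_smul, zero_smul,
    Finset.sum_ite_eq, Finset.mem_univ, if_true]

include hsym hϵ2 hinv hinv' hanti in
lemma hS : ∀ a b, (∑ e, εInv e b • G a e) = -(∑ f, εInv a f • G b f) := by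
  intro a b
  have he := einv_symm ε εInv ϵ hsym hϵ2 hinv hinv'
  simp only [hGexp ε εInv G hinv', Finset.smul_sum, smul_smul]
  have step : ∀ e g, (εInv e b * εInv a g) • lowIx ε G g e
      = -((εInv a g * εInv b e) • lowIx ε G e g) := by
    intro e g
    rw [hanti g e, he e b, smul_neg, smul_smul, ← neg_smul, ← neg_smul]
    congr 1
    linear_combination (-(εInv b e * εInv a g)) * hϵ2
  simp only [step, Finset.sum_neg_distrib]
  rw [Finset.sum_comm]

include hsym hϵ2 hinv hinv' hanti in
lemma htr : (∑ e, ∑ f, εInv e f • lowIx ε G e f) = 0 := by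
  have he := einv_symm ε εInv ϵ hsym hϵ2 hinv hinv'
  have step : ∀ e f, εInv e f • lowIx ε G e f = -(εInv f e • lowIx ε G f e) := by
    intro e f
    rw [hanti e f, he e f, smul_neg, smul_smul, ← neg_smul, ← neg_smul]
    congr 1
    linear_combination (-(εInv f e)) * hϵ2
  set S := ∑ e, ∑ f, εInv e f • lowIx ε G e f with hs
  have hSS : S = -S := by
    calc S = ∑ e, ∑ f, -(εInv f e • lowIx ε G f e) :=
          Finset.sum_congr rfl fun e _ => Finset.sum_congr rfl fun f _ => step e f
    _ = -∑ e, ∑ f, εInv f e • lowIx ε G f e := by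
          simp [Finset.sum_neg_distrib]
    _ = -S := by rw [hs]; congr 1; exact Finset.sum_comm
  have h2 : (2:ℂ) • S = 0 := by
    rw [two_smul]
    nth_rewrite 2 [hSS]
    simp
  calc S = (2⁻¹:ℂ) • ((2:ℂ) • S) := by rw [smul_smul]; norm_num
  _ = 0 := by rw [h2, smul_zero]


include hsym hϵ2 hanti in
lemma L7 : Km A ε εInv * T1 G = -(Km A ε εInv * T2 G) := by
  ext ⟨a,b⟩ ⟨c,d⟩
  rw [mulApply]
  simp only [Km, T1, mul_ite, mul_zero, Finset.sum_ite_eq', Finset.mem_univ, if_true]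
  simp only [alg_mul, ← Finset.smul_sum]
  rw [Matrix.neg_apply, hKG2]
  have hcol : (∑ e, ε e d • G e c) = -(lowIx ε G c d) := by
    have h1 : ∀ e, ε e d • G e c = ϵ • (ε d e • G e c) := by
      intro e; rw [hsym e d, mul_smul]
    calc (∑ e, ε e d • G e c) = ϵ • lowIx ε G d c := by
          rw [lowIx, Finset.smul_sum]; exact Finset.sum_congr rfl fun e _ => h1 e
    _ = -(lowIx ε G c d) := by
          rw [hanti d c, smul_neg, smul_smul, hϵ2, one_smul]
  rw [hcol, smul_neg]

include hsym hϵ2 hinv hinv' hanti in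
lemma L8 : T1 G * Km A ε εInv = -(T2 G * Km A ε εInv) := by
  ext ⟨a,b⟩ ⟨c,d⟩
  rw [Matrix.neg_apply, hG1K, hG2K]
  rw [hS ε εInv ϵ G hsym hϵ2 hinv hinv' hanti a b, smul_neg]

include hsym hϵ2 hinv hinv' hanti in
lemma L9 : Km A ε εInv * T2 G * Km A ε εInv = 0 := by
  ext ⟨a,b⟩ ⟨c,d⟩
  rw [mulApply]
  have step : ∀ e f, (Km A ε εInv * T2 G) (a,b) (e,f) * Km A ε εInv (e,f) (c,d)
      = (εInv a b * ε c d) • (εInv e f • lowIx ε G e f) := by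
    intro e f
    rw [hKG2, Km, mul_alg, smul_smul, smul_smul]
    congr 1; ring
  simp only [step, ← Finset.smul_sum]
  rw [htr ε εInv ϵ G hsym hϵ2 hinv hinv' hanti, smul_zero, Matrix.zero_apply]

include hϵ2 hanti in
lemma L10 : Km A ε εInv * T2 G * Pm A n = -(ϵ • (Km A ε εInv * T2 G)) := by
  ext ⟨a,b⟩ ⟨c,d⟩
  rw [mulApply]
  simp only [hKG2, Pm, ite_and, mul_ite, mul_one, mul_zero]
  rw [Finset.sum_comm]
  simp only [Finset.sum_ite_eq', Finset.mem_univ, if_true]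
  rw [Matrix.neg_apply, Matrix.smul_apply, hKG2]
  rw [hanti d c, smul_neg]
  congr 1
  rw [smul_smul, smul_smul]; congr 1; ring

end lems

theorem stmt11 (n : ℕ) (ϵ : ℂ) (hϵ : ϵ = 1 ∨ ϵ = -1)
    (ε εInv : Matrix (Fin n) (Fin n) ℂ)
    (hsym : ∀ a b, ε a b = ϵ * ε b a)
    (hinv : ε * εInv = 1) (hinv' : εInv * ε = 1)
    (A : Type*) [Ring A] [Algebra ℂ A]
    (G : Matrix (Fin n) (Fin n) A)
    (hanti : GAnti ϵ (lowIx ε G))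
    (hLieT : (T1 G + Pm A n - ϵ • Km A ε εInv) * T2 G =
             T2 G * (T1 G + Pm A n - ϵ • Km A ε εInv))
    (W : Matrix (Fin n × Fin n) (Fin n × Fin n) A)
    (hW : W = -((T2 G + ϵ • (1 : Matrix (Fin n × Fin n) (Fin n × Fin n) A)) *
        ((Pm A n - ϵ • Km A ε εInv) * T2 G - ϵ • T1 G))) :
    W * Km A ε εInv = 0 ∧ Km A ε εInv * W = 0 ∧
    Pm A n * W = -(ϵ • W) ∧ W * Pm A n = -(ϵ • W) ∧
    Pm A n * W * Pm A n = W := by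
  have hϵ2 : ϵ * ϵ = 1 := by rcases hϵ with rfl|rfl <;> norm_num
  set P := Pm A n with hP
  set K := Km A ε εInv with hK
  set G1 := T1 G with hG1
  set G2 := T2 G with hG2
  have l1 : P * P = 1 := L1
  have l2 : P * K = ϵ • K := L2 ε εInv ϵ hsym hϵ2 hinv hinv'
  have l3 : K * P = ϵ • K := L3 ε εInv ϵ hsym
  have l4 : K * K = (ϵ * n) • K := L4 ε εInv ϵ hsym hinv'
  have l5 : P * G1 = G2 * P := L5 G
  have l6 : P * G2 = G1 * P := L6 G
  have l7 : K * G1 = -(K * G2) := L7 ε εInv ϵ G hsym hϵ2 hanti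
  have l8 : G1 * K = -(G2 * K) := L8 ε εInv ϵ G hsym hϵ2 hinv hinv' hanti
  have l9 : K * G2 * K = 0 := L9 ε εInv ϵ G hsym hϵ2 hinv hinv' hanti
  have l10 : K * G2 * P = -(ϵ • (K * G2)) := L10 ε εInv ϵ G hϵ2 hanti
  -- applied forms
  have r1 : ∀ x, P * (P * x) = x := fun x => by rw [← mul_assoc, l1, one_mul]
  have r2 : ∀ x, P * (K * x) = ϵ • (K * x) := fun x => by
    rw [← mul_assoc, l2, smul_mul_assoc]
  have r3 : ∀ x, K * (P * x) = ϵ • (K * x) := fun x => by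
    rw [← mul_assoc, l3, smul_mul_assoc]
  have r4 : ∀ x, K * (K * x) = (ϵ * n) • (K * x) := fun x => by
    rw [← mul_assoc, l4, smul_mul_assoc]
  have r5 : ∀ x, P * (G1 * x) = G2 * (P * x) := fun x => by
    rw [← mul_assoc, l5, mul_assoc]
  have r6 : ∀ x, P * (G2 * x) = G1 * (P * x) := fun x => by
    rw [← mul_assoc, l6, mul_assoc]
  have r7 : ∀ x, K * (G1 * x) = -(K * (G2 * x)) := fun x => by
    rw [← mul_assoc, l7, neg_mul, mul_assoc]
  have r8 : ∀ x, G1 * (K * x) = -(G2 * (K * x)) := fun x => by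
    rw [← mul_assoc, l8, neg_mul, mul_assoc]
  have l9b : K * (G2 * K) = 0 := by rw [← mul_assoc, l9]
  have r9 : ∀ x, K * (G2 * (K * x)) = 0 := fun x => by
    rw [← mul_assoc, ← mul_assoc, l9, zero_mul]
  have l10b : K * (G2 * P) = -(ϵ • (K * G2)) := by rw [← mul_assoc, l10]
  have r10 : ∀ x, K * (G2 * (P * x)) = -(ϵ • (K * (G2 * x))) := fun x => by
    rw [← mul_assoc, ← mul_assoc, l10, neg_mul, smul_mul_assoc, mul_assoc]
  simp only [add_mul, sub_mul, mul_add, mul_sub, smul_mul_assoc, mul_smul_comm] at hLieT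
  rw [l6] at hLieT
  have hLie2 : G2 * G1 = G1 * G2 + G1 * P - ϵ • (K * G2) - G2 * P + ϵ • (G2 * K) := by
    rw [hLieT]; abel
  have rLie : ∀ x, G2 * (G1 * x) = G1 * (G2 * x) + G1 * (P * x) - ϵ • (K * (G2 * x))
      - G2 * (P * x) + ϵ • (G2 * (K * x)) := fun x => by
    rw [← mul_assoc, hLie2]
    simp only [add_mul, sub_mul, smul_mul_assoc, mul_assoc]
  have hDP : K * (G2 * (G1 * P)) = -(ϵ • (K * (G2 * G2))) := by
    rw [← l6, r10]
  have hKG2G1 : K * (G2 * G1) = -(K * (G2 * G2)) + (2*ϵ - (n:ℂ)) • (K * G2) := by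
    rw [hLie2]
    simp only [mul_add, mul_sub, mul_smul_comm, r7, r4, l10b, l9b, smul_neg, smul_smul,
      hϵ2, one_smul, mul_zero, smul_zero, add_zero, neg_neg]
    have hen : ϵ * (ϵ * (n:ℂ)) = n := by rw [← mul_assoc, hϵ2, one_mul]
    rw [hen]
    module
  have hGG1P : G2 * (G1 * P) = G1 * (G2 * P) + G1 + K * G2 - G2 + G2 * K := by
    rw [rLie]
    simp only [l1, mul_one, l10b, l3, mul_smul_comm, smul_neg, smul_smul, hϵ2, one_smul, neg_neg]
    abel
  clear hLieT hP hK hG1 hG2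
  rcases hϵ with rfl|rfl <;>
  all_goals refine ⟨?_, ?_, ?_, ?_, ?_⟩
  all_goals (
    simp only [hW, mul_add, add_mul, mul_sub, sub_mul, neg_mul, mul_neg, smul_mul_assoc,
        mul_smul_comm, mul_assoc, mul_one, one_mul, smul_neg, neg_smul, smul_smul, neg_neg,
        smul_zero, zero_mul, mul_zero, add_zero, zero_add, sub_zero, neg_zero, one_smul,
        neg_one_smul,
        l1, l2, l3, l4, l5, l6, l7, l8, l9, l10, l9b, l10b,
        r1, r2, r3, r4, r5, r6, r7, r8, r9, r10];
    try simp only [hKG2G1, hDP];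
    try simp only [hLie2, hGG1P, one_smul];
    module)
end
end

section
/- Suppose L(u) = u·I + g·I + Ḡ satisfies the linear-evaluation constraints: Ḡ graded antisymmetric and traceless, the Lie algebra relations, Ḡ² + βḠ = m₂·I, and g central. Then the center-generating function C(u) = Lᵗ(u−β)L(u) (transpose taken with respect to ε) is proportional to the identity matrix: C(u) = ϵ((u+g)(u+g−β) − m₂)·I. -/
open Matrix BigOperators

noncomputable section

theorem stmt15 (n : ℕ) (ϵ β : ℂ) (hϵ : ϵ = 1 ∨ ϵ = -1)
    (hβ : β = (n : ℂ) / 2 - ϵ)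
    (ε εInv : Matrix (Fin n) (Fin n) ℂ)
    (hsym : ∀ a b, ε a b = ϵ * ε b a)
    (hinv : ε * εInv = 1) (hinv' : εInv * ε = 1)
    (A : Type*) [Ring A] [Algebra ℂ A]
    (G : Matrix (Fin n) (Fin n) A)
    (hanti : GAnti ϵ (lowIx ε G))
    (htr : Matrix.trace G = 0)
    (hLie : LieRel ε (lowIx ε G))
    (g m₂ : A)
    (hgc : ∀ a b, Commute g (G a b)) (hm₂c : ∀ a b, Commute m₂ (G a b))
    (hgm : Commute g m₂)
    (hcas : G * G + β • G = m₂ • (1 : Matrix (Fin n) (Fin n) A))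
    (L : ℂ → Matrix (Fin n) (Fin n) A)
    (hL : ∀ u, L u = u • (1 : Matrix (Fin n) (Fin n) A)
        + g • (1 : Matrix (Fin n) (Fin n) A) + G)
    (C : ℂ → Matrix (Fin n) (Fin n) A)
    (hC : ∀ u a b, C u a b = ∑ c, lowIx ε (L (u - β)) c a * L u c b) :
    ∀ u a b, C u a b =
      (ϵ * ε a b) • ((u • (1 : A) + g) * ((u - β) • (1 : A) + g) - m₂) := by
  intro u a b
  have hε2 : ϵ * ϵ = 1 := by rcases hϵ with h | h <;> simp [h]
  set Gl := lowIx ε G with hGl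
  set X : A := (u - β) • (1 : A) + g with hX
  set Y : A := u • (1 : A) + g with hY
  -- entries of L
  have hLu : ∀ c d (v : ℂ), L v c d = (if c = d then (v • (1:A) + g) else 0) + G c d := by
    intro c d v
    simp [hL, Matrix.add_apply, Matrix.smul_apply, Matrix.one_apply, smul_ite]
    split <;> simp
  -- lowered L entries
  have hlow : ∀ c, lowIx ε (L (u - β)) c a = ε c a • X + Gl c a := by
    intro c
    simp only [lowIx, hGl, hLu, smul_add, Finset.sum_add_distrib]
    congr 1
    rw [Finset.sum_congr rfl (fun d _ => by rw [smul_ite, smul_zero])]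
    simp [hX]
  -- commutation of Y with entries of Gl
  have hGlc : ∀ a b, Commute Y (Gl a b) := by
    intro a b
    refine Commute.add_left ?_ ?_
    · exact (Commute.smul_left (Commute.one_left _) u)
    · simp only [hGl, lowIx]
      exact Commute.sum_right _ _ _ (fun c _ => (hgc c b).smul_right _)
  -- key sums
  have key1 : ∀ a b, (∑ c, ε c a • G c b) = ϵ • Gl a b := by
    intro a b
    rw [hGl]; simp only [lowIx, Finset.smul_sum]
    refine Finset.sum_congr rfl (fun c _ => ?_)
    rw [hsym c a, mul_smul]
  have hGGm : G * G = m₂ • (1 : Matrix (Fin n) (Fin n) A) - β • G := by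
    rw [← hcas]; abel
  have hGG : ∀ d b', (G * G) d b' = (if d = b' then m₂ else 0) - β • G d b' := by
    intro d b'
    rw [hGGm]
    simp [Matrix.sub_apply, Matrix.smul_apply, Matrix.one_apply, smul_ite]
  have key2 : (∑ c, Gl a c * G c b) = ε a b • m₂ - β • Gl a b := by
    have : (∑ c, Gl a c * G c b) = ∑ d, ε a d • (G * G) d b := by
      simp only [hGl, lowIx, Finset.sum_mul, smul_mul_assoc, Matrix.mul_apply]
      rw [Finset.sum_comm]
      exact Finset.sum_congr rfl (fun d _ => by rw [Finset.smul_sum])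
    rw [this]
    simp only [hGG, smul_sub]
    rw [Finset.sum_sub_distrib]
    congr 1
    · rw [Finset.sum_congr rfl (fun d _ => by rw [smul_ite, smul_zero])]
      simp
    · rw [hGl]; simp only [lowIx, Finset.smul_sum]
      exact Finset.sum_congr rfl (fun d _ => by rw [smul_comm])
  -- now the main computation
  rw [hC]
  have expand : ∀ c, lowIx ε (L (u - β)) c a * L u c b =
      (if c = b then ε c a • (X * Y) else 0) + ε c a • (X * G c b)
        + (if c = b then Gl c a * Y else 0) + Gl c a * G c b := by
    intro c
    have hLub : L u c b = (if c = b then Y else 0) + G c b := by rw [hLu, hY]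
    rw [hlow, hLub]
    rcases eq_or_ne c b with h | h
    · simp only [h, if_true, add_mul, mul_add, smul_mul_assoc, smul_add]
      abel
    · simp only [h, if_false, zero_add, add_mul, smul_mul_assoc, add_zero]
  simp only [expand, Finset.sum_add_distrib, Finset.sum_ite_eq', Finset.mem_univ, if_true]
  have s2 : (∑ c, ε c a • (X * G c b)) = ϵ • (X * Gl a b) := by
    calc (∑ c, ε c a • (X * G c b)) = X * ∑ c, ε c a • G c b := by
          rw [Finset.mul_sum]
          exact Finset.sum_congr rfl (fun c _ => (mul_smul_comm _ _ _).symm)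
      _ = ϵ • (X * Gl a b) := by rw [key1]; exact mul_smul_comm ϵ X (Gl a b)
  have s4 : (∑ c, Gl c a * G c b) = (-ϵ) • (ε a b • m₂ - β • Gl a b) := by
    calc (∑ c, Gl c a * G c b) = ∑ c, ((-ϵ) • Gl a c) * G c b := by
          exact Finset.sum_congr rfl (fun c _ => by rw [hanti c a, ← neg_smul])
      _ = (-ϵ) • ∑ c, Gl a c * G c b := by
          rw [Finset.smul_sum]
          exact Finset.sum_congr rfl (fun c _ => smul_mul_assoc _ _ _)
      _ = _ := by rw [key2]
  rw [s2, s4]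
  have hab : ε b a = ϵ * ε a b := hsym b a
  have comm1 : ∀ (r : ℂ) (x : A), Commute (r • (1:A)) x :=
    fun r x => (Commute.one_left x).smul_left r
  have hXY : X * Y = Y * X := by
    have hc : Commute X Y := by
      refine Commute.add_left (comm1 _ _) ?_
      exact Commute.add_right ((comm1 u g).symm) (Commute.refl g)
    exact hc.eq
  have hXGl : X * Gl a b = Y * Gl a b - β • Gl a b := by
    rw [hX, hY, sub_smul, add_mul, add_mul, sub_mul, smul_mul_assoc, smul_mul_assoc, one_mul]
    abel
  have hGlY : Gl b a * Y = -(ϵ • (Y * Gl a b)) := by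
    rw [hanti b a, neg_mul, smul_mul_assoc, (hGlc a b).eq]
  rw [hXGl, hGlY, hab, hXY]
  rw [mul_smul]
  simp only [smul_sub, smul_smul, neg_mul, neg_smul, smul_neg]
  module
end
end
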